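/- arXiv:2302.12021 — 2 statements merged into one kernel-verified Lean document; each statement's English description precedes it below -/
import Mathlib

section
/- Let V be the vector space of real polynomials in n variables of degree at most 2, let X = {x₁, …, x_m} ⊂ ℝⁿ be a finite set, and let Q_α ∈ V. Suppose that for every h : ℝⁿ → ℝ for which the interpolation constraints Q(x_i) = h(x_i), i = 1,…,m are feasible in V, the problem min_{Q ∈ V} ‖∇²Q − ∇²Q_α‖_F² subject to Q(x_i) = h(x_i) for all i has a unique solution, denoted M(h). Then for any f : ℝⁿ → ℝ for which the constraints are feasible and any C₁, C₂ ∈ ℝ, M(C₁f + C₂) = C₁·M(f) + C₂ + (C₁ − 1)·(M₀(Q_α) − Q_α), where M₀(Q_α) denotes the unique minimizer of ‖∇²Q‖_F² subject to Q(x_i) = Q_α(x_i) for all i. -/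
structure Quad (n : ℕ) where
  c : ℝ
  g : Fin n → ℝ
  A : Matrix (Fin n) (Fin n) ℝ
  symm : A.IsSymm

namespace Quad
variable {n : ℕ}

noncomputable def eval (Q : Quad n) (x : Fin n → ℝ) : ℝ :=
  Q.c + (∑ i, Q.g i * x i) + (1 / 2) * ∑ i, ∑ j, x i * Q.A i j * x j

def add (P Q : Quad n) : Quad n :=
  ⟨P.c + Q.c, P.g + Q.g, P.A + Q.A, P.symm.add Q.symm⟩

def sub (P Q : Quad n) : Quad n :=
  ⟨P.c - Q.c, P.g - Q.g, P.A - Q.A, P.symm.sub Q.symm⟩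

def smul (r : ℝ) (Q : Quad n) : Quad n :=
  ⟨r * Q.c, r • Q.g, r • Q.A, by
    simp only [Matrix.IsSymm, Matrix.transpose_smul, Q.symm.eq]⟩

def addConst (Q : Quad n) (r : ℝ) : Quad n := ⟨Q.c + r, Q.g, Q.A, Q.symm⟩

protected def zero : Quad n := ⟨0, 0, 0, by simp [Matrix.IsSymm]⟩

end Quad

noncomputable def frobSq {n : ℕ} (M : Matrix (Fin n) (Fin n) ℝ) : ℝ := ∑ i, ∑ j, (M i j) ^ 2

def Interpolates {n m : ℕ} (Q : Quad n) (h : (Fin n → ℝ) → ℝ)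
    (x : Fin m → (Fin n → ℝ)) : Prop :=
  ∀ i, Q.eval (x i) = h (x i)

def IsLFNModel {n m : ℕ} (B : Quad n) (h : (Fin n → ℝ) → ℝ)
    (x : Fin m → (Fin n → ℝ)) (Q : Quad n) : Prop :=
  Interpolates Q h x ∧
    ∀ Q' : Quad n, Interpolates Q' h x → frobSq (Q.A - B.A) ≤ frobSq (Q'.A - B.A)

/-!
A quadratic `Q` interpolating `h` is the least Frobenius norm updating model based on `B`
exactly when its Hessian residual `∇²Q - ∇²B` is Frobenius-orthogonal to the Hessians of all
quadratics vanishing on `X` (the first-order condition of a convex quadratic program, which is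
also sufficient by Pythagoras). These residuals form a linear space, and the residual of
`C₁ M(f) + C₂ + (C₁ - 1)(M₀(Q_α) - Q_α)` with respect to `Q_α` is
`C₁ (∇²M(f) - ∇²Q_α) + (C₁ - 1) ∇²M₀(Q_α)`, while its values on `X` are those of `C₁ f + C₂`
since `M₀(Q_α)` agrees with `Q_α` there. Uniqueness then identifies it with `M(C₁ f + C₂)`.
-/

section Frobenius
variable {n : ℕ}

noncomputable def frobInner (M N : Matrix (Fin n) (Fin n) ℝ) : ℝ :=
  ∑ i, ∑ j, M i j * N i j

lemma frobSq_nonneg (M : Matrix (Fin n) (Fin n) ℝ) : 0 ≤ frobSq M :=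
  Finset.sum_nonneg fun _ _ => Finset.sum_nonneg fun _ _ => sq_nonneg _

lemma frobSq_add (M N : Matrix (Fin n) (Fin n) ℝ) :
    frobSq (M + N) = frobSq M + 2 * frobInner M N + frobSq N := by
  simp only [frobSq, frobInner, Finset.mul_sum, ← Finset.sum_add_distrib]
  exact Finset.sum_congr rfl fun i _ => Finset.sum_congr rfl fun j _ => by
    rw [Matrix.add_apply]; ring

lemma frobSq_smul (t : ℝ) (M : Matrix (Fin n) (Fin n) ℝ) :
    frobSq (t • M) = t ^ 2 * frobSq M := by
  simp only [frobSq, Finset.mul_sum, Matrix.smul_apply, smul_eq_mul, mul_pow]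

lemma frobInner_smul_right (t : ℝ) (M N : Matrix (Fin n) (Fin n) ℝ) :
    frobInner M (t • N) = t * frobInner M N := by
  simp only [frobInner, Finset.mul_sum, Matrix.smul_apply, smul_eq_mul, mul_left_comm]

lemma frobInner_smul_add_smul_left (a b : ℝ) (M N P : Matrix (Fin n) (Fin n) ℝ) :
    frobInner (a • M + b • N) P = a * frobInner M P + b * frobInner N P := by
  simp only [frobInner, Finset.mul_sum, ← Finset.sum_add_distrib]
  exact Finset.sum_congr rfl fun i _ => Finset.sum_congr rfl fun j _ => by
    simp only [Matrix.add_apply, Matrix.smul_apply, smul_eq_mul]; ring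

end Frobenius

namespace Quad
variable {n : ℕ}

lemma eval_add (P Q : Quad n) (y : Fin n → ℝ) :
    (P.add Q).eval y = P.eval y + Q.eval y := by
  simp only [eval, add, Matrix.add_apply, Pi.add_apply, add_mul, mul_add,
    Finset.sum_add_distrib]
  ring

lemma eval_sub (P Q : Quad n) (y : Fin n → ℝ) :
    (P.sub Q).eval y = P.eval y - Q.eval y := by
  simp only [eval, sub, Matrix.sub_apply, Pi.sub_apply, sub_mul, mul_sub,
    Finset.sum_sub_distrib]
  ring

lemma eval_smul (r : ℝ) (Q : Quad n) (y : Fin n → ℝ) :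
    (Q.smul r).eval y = r * Q.eval y := by
  simp only [eval, smul, Pi.smul_apply, Matrix.smul_apply, smul_eq_mul, mul_add, Finset.mul_sum]
  simp only [mul_assoc, mul_left_comm r]

lemma eval_addConst (Q : Quad n) (r : ℝ) (y : Fin n → ℝ) :
    (Q.addConst r).eval y = Q.eval y + r := by
  simp only [eval, addConst]; ring

end Quad

section LeastFrobeniusNorm
variable {n m : ℕ} {B : Quad n} {h : (Fin n → ℝ) → ℝ} {x : Fin m → (Fin n → ℝ)} {Q : Quad n}

lemma IsLFNModel.frobInner_eq_zero (hQ : IsLFNModel B h x Q) {D : Quad n}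
    (hD : Interpolates D (fun _ => 0) x) : frobInner (Q.A - B.A) D.A = 0 := by
  have hQ_tD : ∀ t : ℝ, 0 ≤ frobSq D.A * (t * t) + 2 * frobInner (Q.A - B.A) D.A * t + 0 := by
    intro t
    have hint : Interpolates (Q.add (D.smul t)) h x := fun i => by
      rw [Quad.eval_add, Quad.eval_smul, hQ.1 i, hD i, mul_zero, add_zero]
    have hle := hQ.2 _ hint
    have hres : (Q.add (D.smul t)).A - B.A = (Q.A - B.A) + t • D.A := by
      simp only [Quad.add, Quad.smul]; abel
    rw [hres, frobSq_add, frobInner_smul_right, frobSq_smul] at hle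
    linarith
  -- a nonnegative quadratic in `t` has discriminant `4 frobInner (Q.A - B.A) D.A ^ 2 ≤ 0`
  have hdisc := discrim_le_zero hQ_tD
  rw [discrim, mul_zero, sub_zero] at hdisc
  nlinarith [sq_nonneg (frobInner (Q.A - B.A) D.A)]

lemma isLFNModel_of_frobInner_eq_zero (hQ : Interpolates Q h x)
    (horth : ∀ D : Quad n, Interpolates D (fun _ => 0) x → frobInner (Q.A - B.A) D.A = 0) :
    IsLFNModel B h x Q := by
  refine ⟨hQ, fun Q' hQ' => ?_⟩
  have hD : Interpolates (Q'.sub Q) (fun _ => 0) x := fun i => by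
    rw [Quad.eval_sub, hQ i, hQ' i, sub_self]
  have hres : Q'.A - B.A = (Q.A - B.A) + (Q'.sub Q).A := by
    simp only [Quad.sub]; abel
  rw [hres, frobSq_add, horth _ hD]
  linarith [frobSq_nonneg (Q'.sub Q).A]

lemma isLFNModel_of_residual_eq_smul_add_smul {B₁ B₂ Q₁ Q₂ : Quad n}
    {h₁ h₂ : (Fin n → ℝ) → ℝ} (a b : ℝ) (hQ : Interpolates Q h x)
    (hQ₁ : IsLFNModel B₁ h₁ x Q₁) (hQ₂ : IsLFNModel B₂ h₂ x Q₂)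
    (hres : Q.A - B.A = a • (Q₁.A - B₁.A) + b • (Q₂.A - B₂.A)) :
    IsLFNModel B h x Q :=
  isLFNModel_of_frobInner_eq_zero hQ fun _ hD => by
    rw [hres, frobInner_smul_add_smul_left, hQ₁.frobInner_eq_zero hD,
      hQ₂.frobInner_eq_zero hD, mul_zero, mul_zero, add_zero]

end LeastFrobeniusNorm

/-- Theorem `C1,k+C2,k`: if `M h` denotes the unique least Frobenius norm updating
model of `h` on `X` based on `Q_α`, and `Q̃` is the least Frobenius norm interpolant
of `Q_α` on `X` (base zero), then
`M(C₁f + C₂) = (C₁ M(f) + C₂) + (C₁ − 1)(Q̃ − Q_α)`. -/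
theorem lfn_updating_model_of_affine_transformed
    {n m : ℕ} (x : Fin m → (Fin n → ℝ)) (Qα : Quad n)
    (M : ((Fin n → ℝ) → ℝ) → Quad n)
    (hM : ∀ h : (Fin n → ℝ) → ℝ, (∃ Q : Quad n, Interpolates Q h x) →
      IsLFNModel Qα h x (M h) ∧ ∀ Q : Quad n, IsLFNModel Qα h x Q → Q = M h)
    (Qt : Quad n)
    (hQt : IsLFNModel Quad.zero Qα.eval x Qt ∧
      ∀ Q : Quad n, IsLFNModel Quad.zero Qα.eval x Q → Q = Qt)
    (f : (Fin n → ℝ) → ℝ) (hf : ∃ Q : Quad n, Interpolates Q f x)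
    (C₁ C₂ : ℝ) :
    M (fun y => C₁ * f y + C₂) =
      (((M f).smul C₁).addConst C₂).add ((Qt.sub Qα).smul (C₁ - 1)) := by
  set R := (((M f).smul C₁).addConst C₂).add ((Qt.sub Qα).smul (C₁ - 1))
  have hMf := (hM f hf).1
  have hR : Interpolates R (fun y => C₁ * f y + C₂) x := fun i => by
    rw [Quad.eval_add, Quad.eval_addConst, Quad.eval_smul, Quad.eval_smul, Quad.eval_sub,
      hMf.1 i, hQt.1.1 i, sub_self, mul_zero, add_zero]
  have hRres : R.A - Qα.A = C₁ • ((M f).A - Qα.A) + (C₁ - 1) • (Qt.A - Quad.zero.A) := by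
    ext i j
    simp only [R, Quad.add, Quad.addConst, Quad.smul, Quad.sub, Quad.zero, Matrix.add_apply,
      Matrix.sub_apply, Matrix.smul_apply, Matrix.zero_apply, smul_eq_mul]
    ring
  have hRmodel := isLFNModel_of_residual_eq_smul_add_smul C₁ (C₁ - 1) hR hMf hQt.1 hRres
  exact ((hM _ ⟨R, hR⟩).2 R hRmodel).symm
end

section
/- Let W = [[A, Xᵀ],[X, 0]] be the invertible KKT matrix with X ∈ ℝ^{(n+1)×m} having first row all ones and remaining rows (x_j − x₀). If (λᵀ, c, gᵀ)ᵀ = W⁻¹ (rᵀ, 0,…,0)ᵀ, then the multipliers λ satisfy Σ_{j=1}^m λ_j = 0 and Σ_{j=1}^m λ_j (x_j − x₀) = 0 ∈ ℝⁿ. Consequently the matrix Σ_{j=1}^m λ_j (x_j − x₀)(x_j − x₀)ᵀ is unchanged if x₀ is replaced by any other base point; in particular the Hessian ∇²D = Σ_j λ_j (x_j − x₀)(x_j − x₀)ᵀ of the model difference is well-defined independently of the base point. -/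
/-!
The lower block rows of `W (λ, c, g) = (r, 0)` say exactly `X λ = 0`, i.e. `Σ λ_j = 0` and
`Σ λ_j (x_j - x₀) = 0`. Writing `x_j - y = (x_j - x₀) + (x₀ - y)` in the outer product, these two
conditions kill the cross terms and the constant term.
-/

open Matrix

theorem Matrix.mulVec_nonsing_inv_mulVec {n R : Type*} [Fintype n] [DecidableEq n] [CommRing R]
    {M : Matrix n n R} (hM : IsUnit M.det) (b : n → R) : M *ᵥ (M⁻¹ *ᵥ b) = b := by
  rw [mulVec_mulVec, mul_nonsing_inv _ hM, one_mulVec]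

theorem Matrix.mulVec_comp_inl_eq_zero_of_fromBlocks_zero_mulVec
    {l m R : Type*} [Fintype l] [Fintype m] [NonUnitalNonAssocSemiring R]
    {A : Matrix l l R} {B : Matrix l m R} {C : Matrix m l R} {v : l ⊕ m → R} {r : l → R}
    (h : fromBlocks A B C 0 *ᵥ v = Sum.elim r 0) : C *ᵥ (v ∘ Sum.inl) = 0 := by
  simpa [fromBlocks_mulVec] using congrArg (· ∘ Sum.inr) h

theorem Matrix.sum_smul_vecMulVec_sub_eq {ι n R : Type*} [Fintype ι] [CommRing R]
    (lam : ι → R) (x : ι → n → R) (x₀ y : n → R) (hsum : ∑ j, lam j = 0)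
    (hmoment : ∀ i, ∑ j, lam j * (x j i - x₀ i) = 0) :
    ∑ j, lam j • vecMulVec (x j - y) (x j - y) =
      ∑ j, lam j • vecMulVec (x j - x₀) (x j - x₀) := by
  ext a b
  simp only [sum_apply, smul_apply, vecMulVec_apply, Pi.sub_apply, smul_eq_mul]
  have expand : ∀ j, lam j * ((x j a - y a) * (x j b - y b)) =
      lam j * ((x j a - x₀ a) * (x j b - x₀ b))
      + (x₀ b - y b) * (lam j * (x j a - x₀ a))
      + (x₀ a - y a) * (lam j * (x j b - x₀ b))
      + (x₀ a - y a) * (x₀ b - y b) * lam j := fun j => by ring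
  simp only [expand, Finset.sum_add_distrib, ← Finset.mul_sum, hmoment, hsum, mul_zero, add_zero]

theorem kkt_multipliers_and_base_point_invariance_general
    {m n : ℕ} (x : Fin m → (Fin n → ℝ)) (x₀ : Fin n → ℝ)
    (A : Matrix (Fin m) (Fin m) ℝ)
    (Xmat : Matrix (Fin (n + 1)) (Fin m) ℝ)
    (hXmat0 : ∀ j, Xmat 0 j = 1)
    (hXmat1 : ∀ (i : Fin n) (j : Fin m), Xmat i.succ j = x j i - x₀ i)
    (W : Matrix (Fin m ⊕ Fin (n + 1)) (Fin m ⊕ Fin (n + 1)) ℝ)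
    (hW : W = Matrix.fromBlocks A Xmat.transpose Xmat 0)
    (hWinv : IsUnit W.det)
    (r : Fin m → ℝ) (lam : Fin m → ℝ)
    (hlam : ∀ j, lam j = W⁻¹.mulVec (Sum.elim r 0) (Sum.inl j)) :
    (∑ j, lam j = 0) ∧
      (∀ i : Fin n, ∑ j, lam j * (x j i - x₀ i) = 0) ∧
      (∀ y : Fin n → ℝ,
        ∑ j, lam j • Matrix.vecMulVec (x j - y) (x j - y) =
          ∑ j, lam j • Matrix.vecMulVec (x j - x₀) (x j - x₀)) := by
  have hX : Xmat *ᵥ lam = 0 := by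
    have hsolve := mulVec_nonsing_inv_mulVec hWinv (Sum.elim r 0)
    rw [funext hlam]
    rw [hW] at hsolve ⊢
    exact mulVec_comp_inl_eq_zero_of_fromBlocks_zero_mulVec hsolve
  have hsum : ∑ j, lam j = 0 := by
    simpa [mulVec, dotProduct, hXmat0] using congrFun hX 0
  have hmoment : ∀ i : Fin n, ∑ j, lam j * (x j i - x₀ i) = 0 := fun i => by
    simpa [mulVec, dotProduct, hXmat1, mul_comm] using congrFun hX i.succ
  exact ⟨hsum, hmoment, fun y => sum_smul_vecMulVec_sub_eq lam x x₀ y hsum hmoment⟩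

/-- Properties of the Lagrange multipliers in the least Frobenius norm updating
KKT system: `Σ λ_j = 0`, `Σ λ_j (x_j − x₀) = 0`, and consequently the Hessian
`Σ λ_j (x_j − x₀)(x_j − x₀)ᵀ` is independent of the choice of base point. -/
theorem kkt_multipliers_and_base_point_invariance
    {m n : ℕ} (x : Fin m → (Fin n → ℝ)) (x₀ : Fin n → ℝ)
    (A : Matrix (Fin m) (Fin m) ℝ)
    (hA : ∀ i j, A i j = (1 / 2) * (∑ k, (x i k - x₀ k) * (x j k - x₀ k)) ^ 2)
    (Xmat : Matrix (Fin (n + 1)) (Fin m) ℝ)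
    (hXmat0 : ∀ j, Xmat 0 j = 1)
    (hXmat1 : ∀ (i : Fin n) (j : Fin m), Xmat i.succ j = x j i - x₀ i)
    (W : Matrix (Fin m ⊕ Fin (n + 1)) (Fin m ⊕ Fin (n + 1)) ℝ)
    (hW : W = Matrix.fromBlocks A Xmat.transpose Xmat 0)
    (hWinv : IsUnit W.det)
    (r : Fin m → ℝ) (lam : Fin m → ℝ)
    (hlam : ∀ j, lam j = W⁻¹.mulVec (Sum.elim r 0) (Sum.inl j)) :
    (∑ j, lam j = 0) ∧
      (∀ i : Fin n, ∑ j, lam j * (x j i - x₀ i) = 0) ∧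
      (∀ y : Fin n → ℝ,
        ∑ j, lam j • Matrix.vecMulVec (x j - y) (x j - y) =
          ∑ j, lam j • Matrix.vecMulVec (x j - x₀) (x j - x₀)) :=
  kkt_multipliers_and_base_point_invariance_general x x₀ A Xmat hXmat0 hXmat1 W hW hWinv r lam hlam
end
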